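/- Let A be a unitary operator and ρ_∞ a Hermitian positive semidefinite operator such that L†[A] ρ_∞ = iλ A ρ_∞ and ρ_∞ L†[A†] = -iλ ρ_∞ A† for some real λ, where L† is the adjoint Lindbladian. Then ρ_∞ D[A] ρ_∞ = 0, and consequently [L_μ, A] ρ_∞ = 0 for every μ, where D[A] = Σ_μ [L_μ,A]†[L_μ,A] is the dissipation function. -/
import Mathlib


open Matrix
open scoped ComplexOrder

noncomputable section

/-- The adjoint Lindbladian `L†[x] = i[H,x] + Σ_μ (2 L_μ† x L_μ - {L_μ† L_μ, x})`. -/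
def adjLind {d ι : Type*} [Fintype d] [DecidableEq d] [Fintype ι]
    (H : Matrix d d ℂ) (L : ι → Matrix d d ℂ) (x : Matrix d d ℂ) : Matrix d d ℂ :=
  Complex.I • (H * x - x * H) +
    ∑ μ, ((2 : ℂ) • ((L μ)ᴴ * x * L μ) - ((L μ)ᴴ * L μ * x + x * ((L μ)ᴴ * L μ)))

/-- The dissipation function `D[x] = Σ_μ [L_μ,x]†[L_μ,x]`. -/
def dissipation {d ι : Type*} [Fintype d] [DecidableEq d] [Fintype ι]
    (L : ι → Matrix d d ℂ) (x : Matrix d d ℂ) : Matrix d d ℂ :=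
  ∑ μ, (L μ * x - x * L μ)ᴴ * (L μ * x - x * L μ)

/-- Per-summand dissipator identity. -/
lemma dissipator_term {d : Type*} [Fintype d] [DecidableEq d]
    (Lm A : Matrix d d ℂ) :
    ((2 : ℂ) • (Lmᴴ * (Aᴴ * A) * Lm) - (Lmᴴ * Lm * (Aᴴ * A) + (Aᴴ * A) * (Lmᴴ * Lm)))
      - ((2 : ℂ) • (Lmᴴ * Aᴴ * Lm) - (Lmᴴ * Lm * Aᴴ + Aᴴ * (Lmᴴ * Lm))) * A
      - Aᴴ * ((2 : ℂ) • (Lmᴴ * A * Lm) - (Lmᴴ * Lm * A + A * (Lmᴴ * Lm)))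
      = (2 : ℂ) • ((Lm * A - A * Lm)ᴴ * (Lm * A - A * Lm)) := by
  simp only [conjTranspose_sub, conjTranspose_mul, two_smul]
  noncomm_ring

/-- Key identity: `L†[A†A] - L†[A†]A - A†L†[A] = 2 D[A]`. -/
lemma adjLind_dissipation {d ι : Type*} [Fintype d] [DecidableEq d] [Fintype ι]
    (H : Matrix d d ℂ) (L : ι → Matrix d d ℂ) (A : Matrix d d ℂ) :
    adjLind H L (Aᴴ * A) - adjLind H L Aᴴ * A - Aᴴ * adjLind H L A
      = (2 : ℂ) • dissipation L A := by
  unfold adjLind dissipation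
  rw [Finset.smul_sum, add_mul, mul_add, Finset.sum_mul, Finset.mul_sum]
  have hX : Complex.I • (H * (Aᴴ * A) - (Aᴴ * A) * H)
      - (Complex.I • (H * Aᴴ - Aᴴ * H)) * A - Aᴴ * (Complex.I • (H * A - A * H)) = 0 := by
    rw [smul_mul_assoc, mul_smul_comm, ← smul_sub, ← smul_sub, smul_eq_zero]
    right
    noncomm_ring
  calc _ = (Complex.I • (H * (Aᴴ * A) - (Aᴴ * A) * H)
        - (Complex.I • (H * Aᴴ - Aᴴ * H)) * A - Aᴴ * (Complex.I • (H * A - A * H)))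
      + ((∑ μ, ((2 : ℂ) • ((L μ)ᴴ * (Aᴴ * A) * L μ)
            - ((L μ)ᴴ * L μ * (Aᴴ * A) + (Aᴴ * A) * ((L μ)ᴴ * L μ))))
        - (∑ μ, ((2 : ℂ) • ((L μ)ᴴ * Aᴴ * L μ)
            - ((L μ)ᴴ * L μ * Aᴴ + Aᴴ * ((L μ)ᴴ * L μ))) * A)
        - (∑ μ, Aᴴ * ((2 : ℂ) • ((L μ)ᴴ * A * L μ)
            - ((L μ)ᴴ * L μ * A + A * ((L μ)ᴴ * L μ))))) := by abel
    _ = _ := by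
        rw [hX, zero_add, ← Finset.sum_sub_distrib, ← Finset.sum_sub_distrib]
        exact Finset.sum_congr rfl fun μ _ => dissipator_term (L μ) A

lemma adjLind_one {d ι : Type*} [Fintype d] [DecidableEq d] [Fintype ι]
    (H : Matrix d d ℂ) (L : ι → Matrix d d ℂ) :
    adjLind H L 1 = 0 := by
  unfold adjLind
  simp [two_smul]

lemma conjTranspose_mul_self_diag_nonneg {d : Type*} [Fintype d]
    (M : Matrix d d ℂ) (j : d) : (0 : ℂ) ≤ (Mᴴ * M) j j := by
  have h : (Mᴴ * M) j j = dotProduct (star fun i => M i j) (fun i => M i j) := by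
    simp [Matrix.mul_apply, Matrix.conjTranspose_apply, dotProduct]
  rw [h]
  exact dotProduct_star_self_nonneg _

lemma col_eq_zero_of_conjTranspose_mul_self_diag {d : Type*} [Fintype d]
    (M : Matrix d d ℂ) (j : d) (h : (Mᴴ * M) j j = 0) : ∀ i, M i j = 0 := by
  have h' : dotProduct (star fun i => M i j) (fun i => M i j) = 0 := by
    rw [← h]
    simp [Matrix.mul_apply, Matrix.conjTranspose_apply, dotProduct]
  intro i
  exact congrFun (dotProduct_star_self_eq_zero.mp h') i

/-- For a unitary `A` with `L†[A] ρ_∞ = iλ A ρ_∞` and `ρ_∞ L†[A†] = -iλ ρ_∞ A†`,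
the sandwiched dissipation vanishes, `ρ_∞ D[A] ρ_∞ = 0`, and hence
`[L_μ, A] ρ_∞ = 0` for every `μ`. -/
theorem sandwiched_dissipation_vanishes
    {d ι : Type*} [Fintype d] [DecidableEq d] [Fintype ι]
    (H : Matrix d d ℂ) (hH : H.IsHermitian) (L : ι → Matrix d d ℂ)
    (A ρinf : Matrix d d ℂ)
    (hA : A ∈ Matrix.unitaryGroup d ℂ)
    (hherm : ρinf.IsHermitian) (hpsd : ρinf.PosSemidef)
    (lam : ℝ)
    (h1 : adjLind H L A * ρinf = (Complex.I * (lam : ℂ)) • (A * ρinf))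
    (h2 : ρinf * adjLind H L (Aᴴ) = (-(Complex.I * (lam : ℂ))) • (ρinf * Aᴴ)) :
    ρinf * dissipation L A * ρinf = 0 ∧ ∀ μ, (L μ * A - A * L μ) * ρinf = 0 := by
  have hAu : Aᴴ * A = 1 := by
    simpa [Matrix.star_eq_conjTranspose] using hA.1
  -- first: the sandwiched dissipation vanishes
  have key := adjLind_dissipation H L A
  rw [hAu, adjLind_one, zero_sub] at key
  have h2D : (2 : ℂ) • (ρinf * dissipation L A * ρinf) = 0 := by
    have e0 : (2 : ℂ) • (ρinf * dissipation L A * ρinf)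
        = ρinf * ((2 : ℂ) • dissipation L A) * ρinf := by
      rw [mul_smul_comm, smul_mul_assoc]
    rw [e0, ← key]
    have e1 : ρinf * (-(adjLind H L Aᴴ * A) - Aᴴ * adjLind H L A) * ρinf
        = -((ρinf * adjLind H L Aᴴ) * (A * ρinf)) - (ρinf * Aᴴ) * (adjLind H L A * ρinf) := by
      noncomm_ring
    rw [e1, h1, h2, smul_mul_assoc, mul_smul_comm, neg_smul, neg_neg]
    exact sub_self _
  have hD : ρinf * dissipation L A * ρinf = 0 := by
    have := smul_eq_zero.mp h2D
    rcases this with h | h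
    · exact absurd h two_ne_zero
    · exact h
  refine ⟨hD, ?_⟩
  -- second: each commutator annihilates ρinf
  have hsum : ∑ μ, ((L μ * A - A * L μ) * ρinf)ᴴ * ((L μ * A - A * L μ) * ρinf) = 0 := by
    rw [← hD]
    unfold dissipation
    rw [Finset.mul_sum, Finset.sum_mul]
    refine Finset.sum_congr rfl fun μ _ => ?_
    rw [conjTranspose_mul, hherm.eq]
    noncomm_ring
  intro μ
  ext i j
  have h0 : ∑ ν : ι, (((L ν * A - A * L ν) * ρinf)ᴴ * ((L ν * A - A * L ν) * ρinf)) j j = 0 := by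
    rw [← Matrix.sum_apply, hsum]
    rfl
  have hjj := (Finset.sum_eq_zero_iff_of_nonneg
      (fun ν _ => conjTranspose_mul_self_diag_nonneg ((L ν * A - A * L ν) * ρinf) j)).mp
      h0 μ (Finset.mem_univ μ)
  exact col_eq_zero_of_conjTranspose_mul_self_diag _ j hjj i
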